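/- Let μ be a probability measure on ℝ^d and ψ : ℝ^d → ℝ ∪ {+∞} a convex function differentiable μ-almost everywhere, such that ∇ψ pushes μ forward to ν, where both μ and ν are absolutely continuous with respect to Lebesgue measure. Let ψ* be the Legendre-Fenchel dual of ψ, and let R := ∇ψ*, Q := ∇ψ. Then R(Q(u)) = u for μ-almost every u, and R pushes ν forward to μ. -/

import Mathlib

/-! The point is the Fenchel–Young equality case: `ξ ∈ ∂ψ(u)` forces `u ∈ ∂ψ*(ξ)`.
As `Q#μ = ν ≪ Lebesgue`, the subdifferential `∂ψ*(Q u)` is the singleton `{R (Q u)}` for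
`μ`-a.e. `u`, while it contains `u`; hence `R ∘ Q = id` `μ`-a.e. and `R#ν = (R ∘ Q)#μ = μ`. -/

open scoped RealInnerProductSpace
open MeasureTheory Filter

noncomputable section

abbrev E (d : ℕ) : Type := EuclideanSpace ℝ (Fin d)

/-- Subdifferential of an `EReal`-valued function at a point. -/
def subdiffE {d : ℕ} (f : E d → EReal) (x : E d) : Set (E d) :=
  {ξ | ∀ y : E d, f x + ((⟪ξ, y - x⟫ : ℝ) : EReal) ≤ f y}

/-- Legendre–Fenchel dual (convex conjugate) of an `EReal`-valued function. -/
def econj {d : ℕ} (f : E d → EReal) (y : E d) : EReal :=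
  ⨆ x : E d, ((⟪x, y⟫ : ℝ) : EReal) - f x

/-- Convexity of an `EReal`-valued function. -/
def ConvexE {d : ℕ} (f : E d → EReal) : Prop :=
  ∀ x y : E d, ∀ a b : ℝ, 0 ≤ a → 0 ≤ b → a + b = 1 →
    f (a • x + b • y) ≤ (a : EReal) * f x + (b : EReal) * f y

lemma EReal.coe_sub_add_coe (a c : ℝ) (x : EReal) :
    (a : EReal) - x + c = ((a + c : ℝ) : EReal) - x := by
  induction x using EReal.rec with
  | bot => simp
  | coe x => norm_cast; ring
  | top => simp

variable {d : ℕ} {f : E d → EReal}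

lemma coe_inner_sub_le_econj (x y : E d) :
    ((⟪x, y⟫ : ℝ) : EReal) - f x ≤ econj f y :=
  le_iSup (fun x ↦ ((⟪x, y⟫ : ℝ) : EReal) - f x) x

lemma econj_le_of_mem_subdiffE {u ξ : E d} (h : ξ ∈ subdiffE f u) :
    econj f ξ ≤ ((⟪u, ξ⟫ : ℝ) : EReal) - f u := by
  refine iSup_le fun x ↦ ?_
  have hx : f u + ((⟪x, ξ⟫ - ⟪u, ξ⟫ : ℝ) : EReal) ≤ f x := by
    simpa [inner_sub_right, real_inner_comm] using h x
  induction hfu : f u using EReal.rec <;> induction hfx : f x using EReal.rec <;>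
    simp_all [← EReal.coe_add, ← EReal.coe_sub]
  linarith

theorem mem_subdiffE_econj_of_mem_subdiffE {u ξ : E d} (h : ξ ∈ subdiffE f u) :
    u ∈ subdiffE (econj f) ξ := fun y ↦
  calc econj f ξ + ((⟪u, y - ξ⟫ : ℝ) : EReal)
      ≤ ((⟪u, ξ⟫ : ℝ) : EReal) - f u + ((⟪u, y - ξ⟫ : ℝ) : EReal) := by
        gcongr; exact econj_le_of_mem_subdiffE h
    _ = ((⟪u, y⟫ : ℝ) : EReal) - f u := by
        rw [EReal.coe_sub_add_coe, inner_sub_right, add_sub_cancel]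
    _ ≤ econj f y := coe_inner_sub_le_econj u y

theorem statement7_general {d : ℕ} (μ ν : Measure (E d))
    (hν : ν ≪ (volume : Measure (E d)))
    (ψ : E d → EReal)
    (Q R : E d → E d) (hQm : Measurable Q) (hRm : Measurable R)
    (hQ : ∀ᵐ u ∂μ, subdiffE ψ u = {Q u})
    (hR : ∀ᵐ y ∂(volume : Measure (E d)), subdiffE (econj ψ) y = {R y})
    (hpush : Measure.map Q μ = ν) :
    (∀ᵐ u ∂μ, R (Q u) = u) ∧ Measure.map R ν = μ := by
  have hRQ : ∀ᵐ u ∂μ, subdiffE (econj ψ) (Q u) = {R (Q u)} :=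
    ae_of_ae_map hQm.aemeasurable (hpush ▸ hν.ae_le hR)
  have hRQ_inv : ∀ᵐ u ∂μ, R (Q u) = u := by
    filter_upwards [hQ, hRQ] with u hQu hRu
    have hu : u ∈ subdiffE (econj ψ) (Q u) :=
      mem_subdiffE_econj_of_mem_subdiffE (hQu ▸ Set.mem_singleton (Q u))
    rw [hRu] at hu
    exact hu.symm
  refine ⟨hRQ_inv, ?_⟩
  rw [← hpush, Measure.map_map hRm hQm, Measure.map_congr (f := R ∘ Q) (g := id) hRQ_inv,
    Measure.map_id]

/-- If `ψ` is convex, μ-a.e. differentiable with gradient (quantile map) `Q`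
pushing `μ` forward to `ν` (both absolutely continuous), and `R` is the a.e. gradient of the
dual `ψ*` (the rank map), then `R ∘ Q = id` μ-a.e. and `R` pushes `ν` forward to `μ`. -/
theorem statement7 {d : ℕ} (μ ν : Measure (E d))
    [IsProbabilityMeasure μ] [IsProbabilityMeasure ν]
    (hμ : μ ≪ (volume : Measure (E d))) (hν : ν ≪ (volume : Measure (E d)))
    (ψ : E d → EReal) (hbot : ∀ x, ψ x ≠ ⊥) (hconv : ConvexE ψ)
    (Q R : E d → E d) (hQm : Measurable Q) (hRm : Measurable R)
    (hQ : ∀ᵐ u ∂μ, subdiffE ψ u = {Q u})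
    (hR : ∀ᵐ y ∂(volume : Measure (E d)), subdiffE (econj ψ) y = {R y})
    (hpush : Measure.map Q μ = ν) :
    (∀ᵐ u ∂μ, R (Q u) = u) ∧ Measure.map R ν = μ :=
  statement7_general μ ν hν ψ Q R hQm hRm hQ hR hpush
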